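/- Let (X,d,𝔪) be a PI space, let E ⊂ X be a set of finite perimeter, and let {E_i}_{i∈I} = 𝒞𝒞ᵉ(E) be its decomposition into essential connected components. Then for every index set J ⊂ I one has P(⋃_{i∈J} E_i, X) = Σ_{i∈J} P(E_i, X); consequently, for any disjoint index sets J₁, J₂ ⊂ I, P(⋃_{i∈J₁∪J₂} E_i, X) = P(⋃_{i∈J₁} E_i, X) + P(⋃_{i∈J₂} E_i, X). -/

import Mathlib

open MeasureTheory Metric Filter Set ENNReal NNReal Topology

/-- A curve: a rectifiable continuous map from a compact interval into `X`,
parametrized by arc length (hence `1`-Lipschitz on `[0, len]`). -/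
structure Curve (X : Type*) [MetricSpace X] where
  len : ℝ
  len_nonneg : 0 ≤ len
  toFun : ℝ → X
  lipschitzOn : LipschitzOnWith 1 toFun (Set.Icc 0 len)

namespace Curve

variable {X : Type*} [MetricSpace X]

/-- A curve is nonconstant if it attains two distinct values. -/
def IsNonconstant (γ : Curve X) : Prop :=
  ∃ s ∈ Set.Icc (0:ℝ) γ.len, ∃ t ∈ Set.Icc (0:ℝ) γ.len, γ.toFun s ≠ γ.toFun t

/-- A curve lies in a set `W`. -/
def IsIn (γ : Curve X) (W : Set X) : Prop :=
  ∀ s ∈ Set.Icc (0:ℝ) γ.len, γ.toFun s ∈ W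

end Curve

variable {X : Type*} [MetricSpace X] [MeasurableSpace X] [BorelSpace X]

/-- The curve integral `∫_γ g ds` for an arc-length parametrized curve. -/
noncomputable def curveLintegral (g : X → ℝ≥0∞) (γ : Curve X) : ℝ≥0∞ :=
  ∫⁻ s in Set.Icc (0:ℝ) γ.len, g (γ.toFun s)

/-- The upper gradient inequality `|u(x) - u(y)| ≤ ∫_γ g ds` along a curve `γ`
with endpoints `x, y`. -/
def UpperGradIneq (g : X → ℝ≥0∞) (u : X → ℝ) (γ : Curve X) : Prop :=
  ENNReal.ofReal |u (γ.toFun 0) - u (γ.toFun γ.len)| ≤ curveLintegral g γ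

/-- The 1-modulus of a family of curves. -/
noncomputable def mod1 (μ : Measure X) (Γ : Set (Curve X)) : ℝ≥0∞ :=
  ⨅ (ρ : X → ℝ≥0∞) (_ : Measurable ρ ∧ ∀ γ ∈ Γ, 1 ≤ curveLintegral ρ γ),
    ∫⁻ x, ρ x ∂μ

/-- `g` is a 1-weak upper gradient of `u` in `W`: the upper gradient inequality
holds for all nonconstant curves in `W` outside a family of 1-modulus zero. -/
def IsWeakUpperGradientOn (μ : Measure X) (g : X → ℝ≥0∞) (u : X → ℝ) (W : Set X) : Prop :=
  Measurable g ∧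
    mod1 μ {γ : Curve X | γ.IsNonconstant ∧ γ.IsIn W ∧ ¬ UpperGradIneq g u γ} = 0

/-- `g` is a (strong) upper gradient of `u` in `X`. -/
def IsUpperGradient (g : X → ℝ≥0∞) (u : X → ℝ) : Prop :=
  Measurable g ∧ ∀ γ : Curve X, γ.IsNonconstant → UpperGradIneq g u γ

/-- `∫_W g_u dμ`: the integral over `W` of the minimal 1-weak upper gradient of `u`
in `W`, equivalently the infimum of `∫_W g dμ` over all 1-weak upper gradients `g`
of `u` in `W`. -/
noncomputable def gradEnergy (μ : Measure X) (u : X → ℝ) (W : Set X) : ℝ≥0∞ :=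
  ⨅ (g : X → ℝ≥0∞) (_ : IsWeakUpperGradientOn μ g u W), ∫⁻ x in W, g x ∂μ

/-- `u` is locally Lipschitz on `W`. -/
def LocLipschitzOn (u : X → ℝ) (W : Set X) : Prop :=
  ∀ x ∈ W, ∃ K : ℝ≥0, ∃ t ∈ nhdsWithin x W, LipschitzOnWith K u t

/-- Convergence `uᵢ → v` in `L¹_loc(W)`. -/
def TendstoL1loc (μ : Measure X) (W : Set X) (u : ℕ → X → ℝ) (v : X → ℝ) : Prop :=
  ∀ W' : Set X, IsOpen W' → IsCompact (closure W') → closure W' ⊆ W →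
    Tendsto (fun i => ∫⁻ x in W', ENNReal.ofReal |u i x - v x| ∂μ) atTop (𝓝 0)

/-- The total variation `‖Dv‖(W)` of a function `v` in an open set `W`. -/
noncomputable def variationOn (μ : Measure X) (v : X → ℝ) (W : Set X) : ℝ≥0∞ :=
  ⨅ (u : ℕ → X → ℝ) (_ : (∀ i, LocLipschitzOn (u i) W) ∧ TendstoL1loc μ W u v),
    Filter.liminf (fun i => gradEnergy μ (u i) W) Filter.atTop

/-- The total variation `‖Dv‖(A)` of a function `v` in an arbitrary set `A`. -/
noncomputable def totalVar (μ : Measure X) (v : X → ℝ) (A : Set X) : ℝ≥0∞ :=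
  ⨅ (W : Set X) (_ : IsOpen W ∧ A ⊆ W), variationOn μ v W

/-- The perimeter `P(E, A) = ‖Dχ_E‖(A)`. -/
noncomputable def perimeter (μ : Measure X) (E A : Set X) : ℝ≥0∞ :=
  totalVar μ (Set.indicator E fun _ => (1 : ℝ)) A

/-- The measure `μ` is doubling. -/
def IsDoublingMeasure (μ : Measure X) : Prop :=
  ∃ C : ℝ≥0∞, 1 ≤ C ∧ ∀ (x : X) (r : ℝ), 0 < r → μ (ball x (2 * r)) ≤ C * μ (ball x r)

/-- The space supports a (1,1)-Poincaré inequality: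
`⨍_{B(x,r)} |u - u_{B(x,r)}| dμ ≤ C r ⨍_{B(x,λr)} g dμ` for every ball, every
`u ∈ L¹_loc(X)` and every upper gradient `g` of `u` (stated here multiplied
through by the measures of the two balls). -/
def SupportsPoincare (μ : Measure X) : Prop :=
  ∃ C lam : ℝ, 0 < C ∧ 1 ≤ lam ∧
    ∀ (x : X) (r : ℝ), 0 < r → ∀ (u : X → ℝ) (g : X → ℝ≥0∞),
      (∀ (y : X) (s : ℝ), IntegrableOn u (ball y s) μ) → IsUpperGradient g u →
        μ (ball x (lam * r)) *
            ∫⁻ y in ball x r, ENNReal.ofReal |u y - ⨍ z in ball x r, u z ∂μ| ∂μ ≤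
          ENNReal.ofReal (C * r) * μ (ball x r) * ∫⁻ y in ball x (lam * r), g y ∂μ

/-- `(X, d, μ)` is a PI space: complete, doubling, supporting a (1,1)-Poincaré
inequality. -/
def IsPISpace (μ : Measure X) : Prop :=
  CompleteSpace X ∧ IsDoublingMeasure μ ∧ SupportsPoincare μ

/-- A set `E` of finite perimeter is decomposable in a Borel set `D` if there is a
partition `{F, G}` of `E ∩ D` into sets of finite perimeter in `D`, both of positive
measure, with `P(E,D) = P(F,D) + P(G,D)`. -/
def IsDecomposableIn (μ : Measure X) (E D : Set X) : Prop :=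
  ∃ F G : Set X, MeasurableSet F ∧ MeasurableSet G ∧ Disjoint F G ∧ F ∪ G = E ∩ D ∧
    perimeter μ F D < ⊤ ∧ perimeter μ G D < ⊤ ∧ 0 < μ F ∧ 0 < μ G ∧
    perimeter μ E D = perimeter μ F D + perimeter μ G D

/-- `E` is indecomposable in `D`. -/
def IsIndecomposableIn (μ : Measure X) (E D : Set X) : Prop :=
  ¬ IsDecomposableIn μ E D

/-- `{F i}_{i ∈ I}` is a (finite or countable) partition of `E` into indecomposable
Borel sets of positive measure and finite perimeter whose perimeters sum to `P(E,X)`;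
this is the defining property of the essential connected components `𝒞𝒞ᵉ(E)`. -/
def IsEssentialPartition (μ : Measure X) (E : Set X) (I : Set ℕ) (F : ℕ → Set X) : Prop :=
  (∀ i ∈ I, MeasurableSet (F i)) ∧
  (∀ i ∈ I, ∀ j ∈ I, i ≠ j → Disjoint (F i) (F j)) ∧
  (⋃ i ∈ I, F i) = E ∧
  (∀ i ∈ I, 0 < μ (F i)) ∧
  (∀ i ∈ I, perimeter μ (F i) Set.univ < ⊤) ∧
  (∀ i ∈ I, IsIndecomposableIn μ (F i) Set.univ) ∧
  perimeter μ E Set.univ = ∑' i : I, perimeter μ (F i.1) Set.univ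

/-- Given a decomposition `{G i}_{i ∈ I}` of `X ∖ E` into essential connected
components, the saturation of `E`: the union of `E` and its holes, i.e. the
components of finite measure. -/
def saturationOf (μ : Measure X) (E : Set X) (I : Set ℕ) (G : ℕ → Set X) : Set X :=
  E ∪ ⋃ (i : ℕ) (_ : i ∈ I ∧ μ (G i) < ⊤), G i

/-- The measure-theoretic boundary `∂* E`: points where both `E` and its complement
have strictly positive upper density. -/
def mtBoundary (μ : Measure X) (E : Set X) : Set X :=
  {x : X |
    0 < Filter.limsup (fun r => μ (ball x r ∩ E) / μ (ball x r)) (nhdsWithin 0 (Set.Ioi 0)) ∧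
    0 < Filter.limsup (fun r => μ (ball x r \ E) / μ (ball x r)) (nhdsWithin 0 (Set.Ioi 0))}

/-- The restricted codimension-one Hausdorff content `ℋ_R`. -/
noncomputable def codimOneContent (μ : Measure X) (R : ℝ) (A : Set X) : ℝ≥0∞ :=
  ⨅ (s : Set (X × ℝ))
    (_ : s.Countable ∧ (∀ p ∈ s, 0 < p.2 ∧ p.2 ≤ R) ∧ A ⊆ ⋃ p ∈ s, ball p.1 p.2),
    ∑' p : s, μ (ball (p : X × ℝ).1 (p : X × ℝ).2) / ENNReal.ofReal (p : X × ℝ).2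

/-- The codimension-one Hausdorff measure `ℋ(A) = lim_{R → 0} ℋ_R(A)`. -/
noncomputable def codimOneHausdorff (μ : Measure X) (A : Set X) : ℝ≥0∞ :=
  ⨆ (R : ℝ) (_ : 0 < R), codimOneContent μ R A

/-
The perimeter is countably subadditive on pairwise disjoint Borel families: finite
subadditivity comes from the subadditivity of the approximating upper-gradient energies,
and the passage to countable unions from the lower semicontinuity of the total variation
under `L¹_loc` convergence (a diagonal argument, using that balls are relatively compact).
Splitting the index set as `I = J ⊔ K`, the decomposition identity then gives
`Σ_J + Σ_K = P(E) ≤ P(E_J) + P(E_K) ≤ P(E_J) + Σ_K`, and `Σ_K ≤ P(E) < ∞` can be cancelled.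
-/

theorem ENNReal.ofReal_abs_add_sub_add_le (a b c d : ℝ) :
    ENNReal.ofReal |a + b - (c + d)| ≤ ENNReal.ofReal |a - c| + ENNReal.ofReal |b - d| := by
  rw [← ENNReal.ofReal_add (abs_nonneg _) (abs_nonneg _), add_sub_add_comm]
  exact ENNReal.ofReal_le_ofReal (abs_add_le _ _)

theorem ENNReal.ofReal_abs_sub_le (a b c : ℝ) :
    ENNReal.ofReal |a - c| ≤ ENNReal.ofReal |a - b| + ENNReal.ofReal |b - c| := by
  rw [← ENNReal.ofReal_add (abs_nonneg _) (abs_nonneg _)]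
  exact ENNReal.ofReal_le_ofReal (abs_sub_le _ _ _)

theorem ofReal_abs_indicator_sub_indicator {α : Type*} {S U : Set α} (hSU : S ⊆ U) (x : α) :
    ENNReal.ofReal |S.indicator (fun _ => (1 : ℝ)) x - U.indicator (fun _ => (1 : ℝ)) x| =
      (U \ S).indicator 1 x := by
  by_cases hS : x ∈ S
  · simp [hS, hSU hS]
  · by_cases hU : x ∈ U <;> simp [hS, hU]

theorem MeasurableSet.accumulate {α : Type*} [MeasurableSpace α] {s : ℕ → Set α}
    (hs : ∀ i, MeasurableSet (s i)) (n : ℕ) : MeasurableSet (accumulate s n) := by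
  rw [accumulate_def]
  exact .iUnion fun i => .iUnion fun _ => hs i

section

variable {Y : Type*} [MetricSpace Y]

theorem curveLintegral_mono {ρ ρ' : Y → ℝ≥0∞} (h : ∀ x, ρ x ≤ ρ' x) (γ : Curve Y) :
    curveLintegral ρ γ ≤ curveLintegral ρ' γ :=
  lintegral_mono fun _ => h _

/-- `IsWeakUpperGradientOn μ g u W` says that this family has zero `1`-modulus. -/
def exceptionalCurves (g : Y → ℝ≥0∞) (u : Y → ℝ) (W : Set Y) : Set (Curve Y) :=
  {γ | γ.IsNonconstant ∧ γ.IsIn W ∧ ¬ UpperGradIneq g u γ}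

theorem LocLipschitzOn.add {u v : Y → ℝ} {W : Set Y} (hu : LocLipschitzOn u W)
    (hv : LocLipschitzOn v W) : LocLipschitzOn (u + v) W := by
  intro x hx
  obtain ⟨K₁, t₁, ht₁, h₁⟩ := hu x hx
  obtain ⟨K₂, t₂, ht₂, h₂⟩ := hv x hx
  exact ⟨K₁ + K₂, t₁ ∩ t₂, inter_mem ht₁ ht₂,
    (h₁.mono inter_subset_left).add (h₂.mono inter_subset_right)⟩

theorem locLipschitzOn_zero (W : Set Y) : LocLipschitzOn 0 W :=
  fun _ _ => ⟨0, univ, univ_mem, (LipschitzWith.const 0).lipschitzOnWith⟩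

theorem LocLipschitzOn.continuous {u : Y → ℝ} (h : LocLipschitzOn u univ) : Continuous u :=
  continuous_iff_continuousAt.2 fun x => by
    obtain ⟨K, t, ht, hlip⟩ := h x (mem_univ x)
    exact hlip.continuousOn.continuousAt (nhdsWithin_univ x ▸ ht)

section

variable [MeasurableSpace Y] {μ : Measure Y}

theorem mod1_le_lintegral {Γ : Set (Curve Y)} {ρ : Y → ℝ≥0∞} (hρ : Measurable ρ)
    (hadm : ∀ γ ∈ Γ, 1 ≤ curveLintegral ρ γ) : mod1 μ Γ ≤ ∫⁻ x, ρ x ∂μ :=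
  iInf₂_le ρ ⟨hρ, hadm⟩

theorem mod1_empty : mod1 μ (∅ : Set (Curve Y)) = 0 :=
  nonpos_iff_eq_zero.1 <|
    (mod1_le_lintegral (ρ := 0) measurable_const fun _ h => h.elim).trans_eq lintegral_zero

theorem mod1_mono {Γ Γ' : Set (Curve Y)} (h : Γ ⊆ Γ') : mod1 μ Γ ≤ mod1 μ Γ' :=
  le_iInf₂ fun _ hρ => mod1_le_lintegral hρ.1 fun γ hγ => hρ.2 γ (h hγ)

theorem mod1_union_le (Γ₁ Γ₂ : Set (Curve Y)) :
    mod1 μ (Γ₁ ∪ Γ₂) ≤ mod1 μ Γ₁ + mod1 μ Γ₂ :=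
  ENNReal.le_iInf₂_add_iInf₂ fun _ h₁ _ h₂ => by
    refine (mod1_le_lintegral (h₁.1.add h₂.1) ?_).trans_eq (lintegral_add_left h₁.1 _)
    rintro γ (hγ | hγ)
    · exact (h₁.2 γ hγ).trans (curveLintegral_mono (fun _ => le_self_add) γ)
    · exact (h₂.2 γ hγ).trans (curveLintegral_mono (fun _ => le_add_self) γ)

theorem isWeakUpperGradientOn_zero (W : Set Y) : IsWeakUpperGradientOn μ 0 0 W := by
  refine ⟨measurable_const, ?_⟩
  convert mod1_empty (μ := μ)
  refine eq_empty_of_forall_notMem fun γ hγ => hγ.2.2 ?_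
  simp [UpperGradIneq]

theorem gradEnergy_le {g : Y → ℝ≥0∞} {u : Y → ℝ} {W : Set Y}
    (hg : IsWeakUpperGradientOn μ g u W) : gradEnergy μ u W ≤ ∫⁻ x in W, g x ∂μ :=
  iInf₂_le g hg

theorem gradEnergy_zero (W : Set Y) : gradEnergy μ 0 W = 0 :=
  nonpos_iff_eq_zero.1 <| (gradEnergy_le (isWeakUpperGradientOn_zero W)).trans_eq lintegral_zero

theorem TendstoL1loc.comp_tendsto {u : ℕ → Y → ℝ} {v : Y → ℝ} {W : Set Y}
    (h : TendstoL1loc μ W u v) {φ : ℕ → ℕ} (hφ : Tendsto φ atTop atTop) :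
    TendstoL1loc μ W (fun n => u (φ n)) v :=
  fun W' h₁ h₂ h₃ => (h W' h₁ h₂ h₃).comp hφ

theorem TendstoL1loc.add {u₁ u₂ : ℕ → Y → ℝ} {v₁ v₂ : Y → ℝ} {W : Set Y}
    (hu₁ : ∀ i, Measurable (u₁ i)) (hv₁ : Measurable v₁)
    (h₁ : TendstoL1loc μ W u₁ v₁) (h₂ : TendstoL1loc μ W u₂ v₂) :
    TendstoL1loc μ W (fun i => u₁ i + u₂ i) (v₁ + v₂) := by
  intro W' hW' hc hsub
  have hsum := (h₁ W' hW' hc hsub).add (h₂ W' hW' hc hsub)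
  rw [add_zero] at hsum
  refine tendsto_of_tendsto_of_tendsto_of_le_of_le tendsto_const_nhds hsum (fun _ => zero_le)
    fun i => ?_
  exact (lintegral_mono fun x => ENNReal.ofReal_abs_add_sub_add_le _ _ _ _).trans_eq
    (lintegral_add_left ((hu₁ i).sub hv₁).abs.ennreal_ofReal _)

theorem TendstoL1loc.of_lintegral_ball_le {f g : ℕ → Y → ℝ} {w : Y → ℝ} {δ : ℕ → ℝ≥0∞}
    (x₀ : Y) (hf : ∀ n, Measurable (f n)) (hg : ∀ n, Measurable (g n))
    (hfg : ∀ n : ℕ, ∫⁻ x in ball x₀ n, ENNReal.ofReal |f n x - g n x| ∂μ ≤ δ n)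
    (hδ : Tendsto δ atTop (𝓝 0)) (hgw : TendstoL1loc μ univ g w) :
    TendstoL1loc μ univ f w := by
  intro W' hW' hc hsub
  have hsum := hδ.add (hgw W' hW' hc hsub)
  rw [add_zero] at hsum
  refine tendsto_of_tendsto_of_tendsto_of_le_of_le' tendsto_const_nhds hsum
    (Eventually.of_forall fun _ => zero_le) ?_
  obtain ⟨R, hR⟩ := hc.isBounded.subset_ball x₀
  filter_upwards [eventually_ge_atTop ⌈R⌉₊] with n hn
  have hW'n : W' ⊆ ball x₀ n :=
    subset_closure.trans <| hR.trans <| ball_subset_ball <|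
      (Nat.le_ceil R).trans (by exact_mod_cast hn)
  calc ∫⁻ x in W', ENNReal.ofReal |f n x - w x| ∂μ
      ≤ ∫⁻ x in W', ENNReal.ofReal |f n x - g n x| ∂μ
          + ∫⁻ x in W', ENNReal.ofReal |g n x - w x| ∂μ :=
        (lintegral_mono fun x => ENNReal.ofReal_abs_sub_le _ _ _).trans_eq
          (lintegral_add_left ((hf n).sub (hg n)).abs.ennreal_ofReal _)
    _ ≤ δ n + ∫⁻ x in W', ENNReal.ofReal |g n x - w x| ∂μ :=
        add_le_add ((lintegral_mono_set hW'n).trans (hfg n)) le_rfl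

theorem variationOn_le {v : Y → ℝ} {W : Set Y} (u : ℕ → Y → ℝ)
    (hu : (∀ i, LocLipschitzOn (u i) W) ∧ TendstoL1loc μ W u v) :
    variationOn μ v W ≤ liminf (fun i => gradEnergy μ (u i) W) atTop :=
  iInf₂_le u hu

theorem variationOn_zero (W : Set Y) : variationOn μ 0 W = 0 := by
  refine nonpos_iff_eq_zero.1 ((variationOn_le (fun _ => 0) ⟨fun _ => locLipschitzOn_zero W,
    fun _ _ _ _ => by simp⟩).trans_eq ?_)
  simp [gradEnergy_zero]

theorem exists_locLipschitzOn_approx_of_variationOn_lt {v : Y → ℝ} {W W' : Set Y}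
    {c δ : ℝ≥0∞} (hc : variationOn μ v W < c) (hW' : IsOpen W')
    (hW'c : IsCompact (closure W')) (hW'W : closure W' ⊆ W) (hδ : 0 < δ) :
    ∃ f, LocLipschitzOn f W ∧ gradEnergy μ f W < c ∧
      ∫⁻ x in W', ENNReal.ofReal |f x - v x| ∂μ < δ := by
  simp only [variationOn, iInf_lt_iff] at hc
  obtain ⟨u, ⟨hu_lip, hu_conv⟩, hu_lt⟩ := hc
  obtain ⟨i, hi_energy, hi_close⟩ :=
    ((frequently_lt_of_liminf_lt (by isBoundedDefault) hu_lt).and_eventually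
      ((hu_conv W' hW' hW'c hW'W).eventually_lt_const hδ)).exists
  exact ⟨u i, hu_lip i, hi_energy, hi_close⟩

theorem perimeter_univ_eq (E : Set Y) :
    perimeter μ E univ = variationOn μ (E.indicator fun _ => (1 : ℝ)) univ :=
  le_antisymm (iInf₂_le univ ⟨isOpen_univ, subset_rfl⟩)
    (le_iInf₂ fun W hW => by rw [univ_subset_iff.1 hW.2])

theorem perimeter_empty : perimeter μ (∅ : Set Y) univ = 0 := by
  rw [perimeter_univ_eq, indicator_empty]
  exact variationOn_zero univ

theorem tendstoL1loc_indicator_iUnion [IsFiniteMeasureOnCompacts μ] {S : ℕ → Set Y}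
    (hm : ∀ n, MeasurableSet (S n)) (hS : Monotone S) (W : Set Y) :
    TendstoL1loc μ W (fun n => (S n).indicator fun _ => (1 : ℝ))
      ((⋃ n, S n).indicator fun _ => (1 : ℝ)) := by
  intro W' hW' hc _
  have : IsFiniteMeasure (μ.restrict W') := isFiniteMeasure_restrict.2
    ((measure_mono subset_closure).trans_lt hc.measure_lt_top).ne
  have hD : ∀ n, MeasurableSet ((⋃ n, S n) \ S n) := fun n =>
    (MeasurableSet.iUnion hm).diff (hm n)
  simp_rw [ofReal_abs_indicator_sub_indicator (subset_iUnion S _), lintegral_indicator_one (hD _)]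
  have hempty : ⋂ n, ((⋃ n, S n) \ S n) = ∅ := by
    refine eq_empty_of_forall_notMem fun x hx => ?_
    obtain ⟨m, hm⟩ := mem_iUnion.1 (mem_iInter.1 hx 0).1
    exact (mem_iInter.1 hx m).2 hm
  simpa [hempty, Function.comp_def] using tendsto_measure_iInter_atTop (μ := μ.restrict W')
    (fun n => (hD n).nullMeasurableSet) (fun _ _ h => sdiff_subset_sdiff_right (hS h))
    ⟨0, measure_ne_top _ _⟩

end

end

section

open Function

variable {μ : Measure X}

theorem curveLintegral_add {g : X → ℝ≥0∞} (hg : Measurable g) (h : X → ℝ≥0∞) (γ : Curve X) :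
    curveLintegral (g + h) γ = curveLintegral g γ + curveLintegral h γ :=
  lintegral_add_left' (hg.comp_aemeasurable
    (γ.lipschitzOn.continuousOn.aemeasurable measurableSet_Icc)) _

theorem UpperGradIneq.add {g h : X → ℝ≥0∞} {u v : X → ℝ} {γ : Curve X} (hg : Measurable g)
    (hu : UpperGradIneq g u γ) (hv : UpperGradIneq h v γ) :
    UpperGradIneq (g + h) (u + v) γ := by
  rw [UpperGradIneq, curveLintegral_add hg]
  exact (ENNReal.ofReal_abs_add_sub_add_le _ _ _ _).trans (add_le_add hu hv)

theorem exceptionalCurves_add_subset {g h : X → ℝ≥0∞} {u v : X → ℝ} {W : Set X}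
    (hg : Measurable g) :
    exceptionalCurves (g + h) (u + v) W ⊆ exceptionalCurves g u W ∪ exceptionalCurves h v W := by
  rintro γ ⟨hnc, hin, hbad⟩
  by_contra hgood
  simp only [exceptionalCurves, mem_union, mem_ofPred_eq, not_or, not_and, not_not] at hgood
  exact hbad ((hgood.1 hnc hin).add hg (hgood.2 hnc hin))

theorem IsWeakUpperGradientOn.add {g h : X → ℝ≥0∞} {u v : X → ℝ} {W : Set X}
    (hg : IsWeakUpperGradientOn μ g u W) (hh : IsWeakUpperGradientOn μ h v W) :
    IsWeakUpperGradientOn μ (g + h) (u + v) W := by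
  refine ⟨hg.1.add hh.1, nonpos_iff_eq_zero.1 ?_⟩
  calc mod1 μ (exceptionalCurves (g + h) (u + v) W)
      ≤ mod1 μ (exceptionalCurves g u W) + mod1 μ (exceptionalCurves h v W) :=
        (mod1_mono (exceptionalCurves_add_subset hg.1)).trans (mod1_union_le _ _)
    _ = 0 := by simp only [exceptionalCurves, hg.2, hh.2, add_zero]

theorem gradEnergy_add_le (u v : X → ℝ) (W : Set X) :
    gradEnergy μ (u + v) W ≤ gradEnergy μ u W + gradEnergy μ v W :=
  ENNReal.le_iInf₂_add_iInf₂ fun _ hg _ hh =>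
    (gradEnergy_le (hg.add hh)).trans_eq (lintegral_add_left hg.1 _)

theorem variationOn_univ_add_le {u v : X → ℝ} (hu : Measurable u) :
    variationOn μ (u + v) univ ≤ variationOn μ u univ + variationOn μ v univ := by
  refine ENNReal.le_iInf₂_add_iInf₂ fun us ⟨hus_lip, hus_conv⟩ vs ⟨hvs_lip, hvs_conv⟩ => ?_
  -- `liminf` is only superadditive, so pass to subsequences realising each `liminf`.
  obtain ⟨σ, hσ_lim, hσ⟩ := exists_seq_tendsto_liminf (f := atTop)
    (u := fun i => gradEnergy μ (us i) univ)
  obtain ⟨τ, hτ_lim, hτ⟩ := exists_seq_tendsto_liminf (f := atTop)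
    (u := fun i => gradEnergy μ (vs i) univ)
  have hconv : TendstoL1loc μ univ (fun i => us (σ i) + vs (τ i)) (u + v) :=
    (hus_conv.comp_tendsto hσ).add (fun i => (hus_lip (σ i)).continuous.measurable) hu
      (hvs_conv.comp_tendsto hτ)
  calc variationOn μ (u + v) univ
      ≤ liminf (fun i => gradEnergy μ (us (σ i) + vs (τ i)) univ) atTop :=
        variationOn_le _ ⟨fun i => (hus_lip _).add (hvs_lip _), hconv⟩
    _ ≤ liminf (fun i => gradEnergy μ (us (σ i)) univ + gradEnergy μ (vs (τ i)) univ) atTop :=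
        liminf_le_liminf (Eventually.of_forall fun i => gradEnergy_add_le _ _ _)
    _ = _ := (hσ_lim.add hτ_lim).liminf_eq

theorem variationOn_univ_le_liminf [ProperSpace X] {v : ℕ → X → ℝ} {w : X → ℝ}
    (hv : ∀ n, Measurable (v n)) (hvw : TendstoL1loc μ univ v w) :
    variationOn μ w univ ≤ liminf (fun n => variationOn μ (v n) univ) atTop := by
  rcases isEmpty_or_nonempty X with hX | ⟨⟨x₀⟩⟩
  · have hvw : ∀ n, v n = w := fun n => funext fun x => isEmptyElim x
    simp [hvw]
  refine le_of_forall_gt_imp_ge_of_dense fun c hc => ?_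
  obtain ⟨φ, hφ, hφc⟩ := extraction_of_frequently_atTop
    (frequently_lt_of_liminf_lt (by isBoundedDefault) hc)
  have hball : ∀ n : ℕ, IsCompact (closure (ball x₀ n)) := fun n =>
    (isCompact_closedBall x₀ n).of_isClosed_subset isClosed_closure closure_ball_subset_closedBall
  -- Diagonal sequence: `f n` is `1 / n`-close to `v (φ n)` on `ball x₀ n`.
  choose f hf_lip hf_energy hf_close using fun n =>
    exists_locLipschitzOn_approx_of_variationOn_lt (hφc n) isOpen_ball (hball n)
      (subset_univ _) (ENNReal.inv_pos.2 (natCast_ne_top n))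
  have hfw : TendstoL1loc μ univ f w :=
    .of_lintegral_ball_le x₀ (fun n => (hf_lip n).continuous.measurable) (fun n => hv (φ n))
      (fun n => (hf_close n).le) ENNReal.tendsto_inv_nat_nhds_zero
      (hvw.comp_tendsto hφ.tendsto_atTop)
  calc variationOn μ w univ ≤ liminf (fun n => gradEnergy μ (f n) univ) atTop :=
        variationOn_le f ⟨hf_lip, hfw⟩
    _ ≤ c := liminf_le_of_frequently_le' (Frequently.of_forall fun n => (hf_energy n).le)

theorem perimeter_union_le {A B : Set X} (hA : MeasurableSet A) (hAB : Disjoint A B) :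
    perimeter μ (A ∪ B) univ ≤ perimeter μ A univ + perimeter μ B univ := by
  simp only [perimeter_univ_eq, indicator_union_of_disjoint hAB]
  exact variationOn_univ_add_le (measurable_const.indicator hA)

theorem perimeter_accumulate_le {F : ℕ → Set X} (hm : ∀ i, MeasurableSet (F i))
    (hd : Pairwise (Disjoint on F)) (n : ℕ) :
    perimeter μ (accumulate F n) univ ≤ ∑ i ∈ Finset.range (n + 1), perimeter μ (F i) univ := by
  induction n with
  | zero => simp
  | succ n ih =>
    rw [accumulate_succ, Finset.sum_range_succ]
    exact (perimeter_union_le (.accumulate hm n) (disjoint_accumulate hd n.lt_succ_self)).trans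
      (add_le_add ih le_rfl)

theorem perimeter_iUnion_le [ProperSpace X] [IsFiniteMeasureOnCompacts μ] {F : ℕ → Set X}
    (hm : ∀ i, MeasurableSet (F i)) (hd : Pairwise (Disjoint on F)) :
    perimeter μ (⋃ i, F i) univ ≤ ∑' i, perimeter μ (F i) univ := by
  have hacc : ∀ n, MeasurableSet (accumulate F n) := .accumulate hm
  calc perimeter μ (⋃ i, F i) univ
      = variationOn μ ((⋃ n, accumulate F n).indicator fun _ => (1 : ℝ)) univ := by
        rw [iUnion_accumulate, perimeter_univ_eq]
    _ ≤ liminf (fun n => perimeter μ (accumulate F n) univ) atTop := by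
        simp only [perimeter_univ_eq]
        exact variationOn_univ_le_liminf (fun n => measurable_const.indicator (hacc n))
          (tendstoL1loc_indicator_iUnion hacc monotone_accumulate univ)
    _ ≤ ∑' i, perimeter μ (F i) univ :=
        liminf_le_of_frequently_le' (Frequently.of_forall fun n =>
          (perimeter_accumulate_le hm hd n).trans (ENNReal.sum_le_tsum _))

theorem perimeter_biUnion_le [ProperSpace X] [IsFiniteMeasureOnCompacts μ] {F : ℕ → Set X}
    {J : Set ℕ} (hm : ∀ i ∈ J, MeasurableSet (F i)) (hd : J.PairwiseDisjoint F) :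
    perimeter μ (⋃ i ∈ J, F i) univ ≤ ∑' i : J, perimeter μ (F i) univ := by
  have hG : ∀ i, perimeter μ (⋃ _ : i ∈ J, F i) univ =
      J.indicator (fun i => perimeter μ (F i) univ) i := fun i => by
    by_cases hi : i ∈ J <;> simp [hi, perimeter_empty]
  refine (perimeter_iUnion_le (fun i => .iUnion fun hi => hm i hi) ?_).trans_eq ?_
  · intro i j hij
    by_cases hi : i ∈ J
    · by_cases hj : j ∈ J
      · simpa [onFun, hi, hj] using hd hi hj hij
      · simp [onFun, hj]
    · simp [onFun, hi]
  · exact (tsum_congr hG).trans (tsum_subtype J fun i => perimeter μ (F i) univ).symm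

theorem perimeter_biUnion_eq_tsum_of_subset [ProperSpace X] [IsFiniteMeasureOnCompacts μ]
    {F : ℕ → Set X} {I J : Set ℕ} (hm : ∀ i ∈ I, MeasurableSet (F i))
    (hd : I.PairwiseDisjoint F)
    (hI : perimeter μ (⋃ i ∈ I, F i) univ = ∑' i : I, perimeter μ (F i) univ)
    (hfin : perimeter μ (⋃ i ∈ I, F i) univ ≠ ⊤) (hJ : J ⊆ I) :
    perimeter μ (⋃ i ∈ J, F i) univ = ∑' i : J, perimeter μ (F i) univ := by
  obtain ⟨K, rfl, hJK⟩ : ∃ K, I = J ∪ K ∧ Disjoint J K :=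
    ⟨I \ J, (union_sdiff_cancel hJ).symm, disjoint_sdiff_right⟩
  have hsplit : ∑' i : ↥(J ∪ K), perimeter μ (F i) univ =
      ∑' i : J, perimeter μ (F i) univ + ∑' i : K, perimeter μ (F i) univ :=
    ENNReal.summable.tsum_union_disjoint (f := fun i => perimeter μ (F i) univ) hJK
      ENNReal.summable
  have hdisj : Disjoint (⋃ i ∈ J, F i) (⋃ i ∈ K, F i) := by
    simp only [disjoint_iUnion_left, disjoint_iUnion_right]
    exact fun k hk j hj => hd (mem_union_left K hj) (mem_union_right J hk) (hJK.ne_of_mem hj hk)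
  have hJle := perimeter_biUnion_le (μ := μ) (fun i hi => hm i (mem_union_left K hi))
    (hd.subset subset_union_left)
  have hKle := perimeter_biUnion_le (μ := μ) (fun i hi => hm i (mem_union_right J hi))
    (hd.subset subset_union_right)
  have hKfin : ∑' i : K, perimeter μ (F i) univ ≠ ⊤ :=
    ne_top_of_le_ne_top (hI ▸ hfin)
      (ENNReal.tsum_mono_subtype (fun i => perimeter μ (F i) univ) subset_union_right)
  refine le_antisymm hJle ((ENNReal.add_le_add_iff_right hKfin).1 ?_)
  calc ∑' i : J, perimeter μ (F i) univ + ∑' i : K, perimeter μ (F i) univ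
      = perimeter μ ((⋃ i ∈ J, F i) ∪ ⋃ i ∈ K, F i) univ := by rw [← hsplit, ← hI, biUnion_union]
    _ ≤ perimeter μ (⋃ i ∈ J, F i) univ + perimeter μ (⋃ i ∈ K, F i) univ :=
        perimeter_union_le (.biUnion (to_countable J) fun i hi => hm i (mem_union_left K hi)) hdisj
    _ ≤ perimeter μ (⋃ i ∈ J, F i) univ + ∑' i : K, perimeter μ (F i) univ :=
        add_le_add le_rfl hKle

end

theorem perimeter_components_subfamily_general
    [ProperSpace X] (μ : Measure X)
    (hball : ∀ (x : X) (r : ℝ), 0 < r → 0 < μ (ball x r) ∧ μ (ball x r) < ⊤)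
    (E : Set X) (hEfin : perimeter μ E Set.univ < ⊤)
    (I : Set ℕ) (F : ℕ → Set X) (hpart : IsEssentialPartition μ E I F) :
    (∀ J : Set ℕ, J ⊆ I →
      perimeter μ (⋃ i ∈ J, F i) Set.univ = ∑' i : J, perimeter μ (F i.1) Set.univ) ∧
    (∀ J₁ J₂ : Set ℕ, J₁ ⊆ I → J₂ ⊆ I → Disjoint J₁ J₂ →
      perimeter μ (⋃ i ∈ J₁ ∪ J₂, F i) Set.univ =
        perimeter μ (⋃ i ∈ J₁, F i) Set.univ + perimeter μ (⋃ i ∈ J₂, F i) Set.univ) := by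
  obtain ⟨hFm, hFd, hFU, -, -, -, hFsum⟩ := hpart
  have : IsLocallyFiniteMeasure μ :=
    ⟨fun x => ⟨ball x 1, ball_mem_nhds x one_pos, (hball x 1 one_pos).2⟩⟩
  have hadd : ∀ J ⊆ I,
      perimeter μ (⋃ i ∈ J, F i) univ = ∑' i : J, perimeter μ (F i) univ := fun J hJ =>
    perimeter_biUnion_eq_tsum_of_subset hFm (fun i hi j hj hij => hFd i hi j hj hij)
      (hFU ▸ hFsum) (hFU ▸ hEfin.ne) hJ
  refine ⟨hadd, fun J₁ J₂ h₁ h₂ hJ => ?_⟩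
  rw [hadd _ (union_subset h₁ h₂), hadd _ h₁, hadd _ h₂]
  exact ENNReal.summable.tsum_union_disjoint (f := fun i => perimeter μ (F i) univ) hJ
    ENNReal.summable

/-- For the decomposition `𝒞𝒞ᵉ(E) = {E_i}_{i ∈ I}` of a set of finite perimeter
into essential connected components in a PI space, the perimeter of the union of
any subfamily equals the sum of the perimeters; consequently the perimeter is
additive over unions indexed by disjoint index sets. -/
theorem perimeter_components_subfamily
    [ProperSpace X] (μ : Measure X)
    (hball : ∀ (x : X) (r : ℝ), 0 < r → 0 < μ (ball x r) ∧ μ (ball x r) < ⊤)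
    (hPI : IsPISpace μ)
    (E : Set X) (hE : MeasurableSet E) (hEfin : perimeter μ E Set.univ < ⊤)
    (I : Set ℕ) (F : ℕ → Set X) (hpart : IsEssentialPartition μ E I F) :
    (∀ J : Set ℕ, J ⊆ I →
      perimeter μ (⋃ i ∈ J, F i) Set.univ = ∑' i : J, perimeter μ (F i.1) Set.univ) ∧
    (∀ J₁ J₂ : Set ℕ, J₁ ⊆ I → J₂ ⊆ I → Disjoint J₁ J₂ →
      perimeter μ (⋃ i ∈ J₁ ∪ J₂, F i) Set.univ =
        perimeter μ (⋃ i ∈ J₁, F i) Set.univ + perimeter μ (⋃ i ∈ J₂, F i) Set.univ) :=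
  perimeter_components_subfamily_general μ hball E hEfin I F hpart
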